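/- arXiv:2308.11262 — 7 statements merged into one kernel-verified Lean document; each statement's English description precedes it below -/
import Mathlib

section
/- (Niven's Theorem, as stated in the paper.) Let φ be a real number such that φ/(2π) is a rational number. If cos φ is a rational number, then cos φ ∈ {0, 1/2, −1/2, 1, −1}. -/
open Polynomial

lemma dickson_monic_deg : ∀ n : ℕ, 1 ≤ n →
    (dickson 1 (1 : ℤ) n).Monic ∧ (dickson 1 (1 : ℤ) n).natDegree = n
  | 1, _ => by simp [dickson_one, monic_X]
  | 2, _ => by
      have h2 : dickson 1 (1:ℤ) 2 = X ^ 2 - C 2 := by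
        rw [dickson_two, C_1, one_mul]; norm_num
      rw [h2]
      exact ⟨monic_X_pow_sub_C 2 two_ne_zero, by compute_degree!⟩
  | (n + 3), _ => by
      have ih1 := dickson_monic_deg (n + 1) (by omega)
      have ih2 := dickson_monic_deg (n + 2) (by omega)
      rw [dickson_add_two]
      have hm : (X * dickson 1 (1:ℤ) (n + 2)).Monic := monic_X.mul ih2.1
      have hd : (X * dickson 1 (1:ℤ) (n + 2)).natDegree = n + 3 := by
        rw [monic_X.natDegree_mul ih2.1, natDegree_X, ih2.2]; omega
      have hlt : (C (1:ℤ) * dickson 1 1 (n+1)).degree < (X * dickson 1 (1:ℤ) (n + 2)).degree := by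
        rw [degree_eq_natDegree hm.ne_zero, hd]
        calc (C (1:ℤ) * dickson 1 1 (n+1)).degree ≤ (dickson 1 (1:ℤ) (n+1)).degree := by
              simpa using degree_mul_le _ _
          _ ≤ (n + 1 : ℕ) := degree_le_natDegree.trans (by rw [ih1.2])
          _ < ((n + 3 : ℕ) : WithBot ℕ) := by exact_mod_cast by omega
      refine ⟨hm.sub_of_left hlt, ?_⟩
      rw [natDegree_sub_eq_left_of_natDegree_lt, hd]
      rw [hd]
      calc (C (1:ℤ) * dickson 1 1 (n+1)).natDegree ≤ (dickson 1 (1:ℤ) (n+1)).natDegree :=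
            natDegree_mul_le.trans (by simp)
        _ < n + 3 := by omega



/-- **Niven's Theorem** (as stated in the paper): if `φ/(2π)` is rational and
`cos φ` is rational, then `cos φ ∈ {0, 1/2, -1/2, 1, -1}`. -/
theorem niven_theorem (φ : ℝ)
    (hφ : φ / (2 * Real.pi) ∈ Set.range ((↑) : ℚ → ℝ))
    (hcos : Real.cos φ ∈ Set.range ((↑) : ℚ → ℝ)) :
    Real.cos φ ∈ ({0, 1 / 2, -(1 / 2), 1, -1} : Set ℝ) := by
  obtain ⟨r, hr⟩ := hφ
  obtain ⟨c, hc⟩ := hcos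
  set n : ℕ := r.den with hn
  have hn1 : 1 ≤ n := r.pos
  have hpi : (2 * Real.pi) ≠ 0 := by positivity
  have hφeq : φ = (r : ℝ) * (2 * Real.pi) := by
    field_simp at hr; linarith
  -- cos (n φ) = 1
  have hnr : ((n : ℚ)) * r = (r.num : ℚ) := by
    rw [hn, mul_comm]
    exact_mod_cast Rat.mul_den_eq_num r
  have hnφ : (n : ℝ) * φ = (r.num : ℝ) * (2 * Real.pi) := by
    rw [hφeq, ← mul_assoc]
    congr 1
    exact_mod_cast congrArg (fun q : ℚ => (q : ℝ)) hnr
  have hcosn : Real.cos ((n : ℝ) * φ) = 1 := by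
    rw [hnφ]
    exact Real.cos_int_mul_two_pi r.num
  -- complex evaluation of the Dickson polynomial
  set x : ℂ := Complex.exp (φ * Complex.I)
  set y : ℂ := Complex.exp (-(φ * Complex.I))
  have hxy : x * y = 1 := by rw [← Complex.exp_add]; simp
  have hsum : x + y = 2 * (c : ℂ) := by
    have := Complex.cos (φ : ℂ)
    have hcosc : Complex.cos φ = (x + y) / 2 := by
      rw [Complex.cos]; ring_nf; rfl
    have : Complex.cos (φ : ℝ) = ((c : ℝ) : ℂ) := by
      rw [← Complex.ofReal_cos, hc]
    rw [hcosc] at this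
    linear_combination 2 * this
  have heval : (dickson 1 (1:ℂ) n).eval (2 * (c : ℂ)) = 2 := by
    rw [← hsum, dickson_one_one_eval_add_inv x y hxy n]
    have hx : x ^ n = Complex.exp (((n : ℝ) * φ : ℝ) * Complex.I) := by
      rw [← Complex.exp_nat_mul]; push_cast; ring_nf
    have hy : y ^ n = Complex.exp (-(((n : ℝ) * φ : ℝ) * Complex.I)) := by
      rw [← Complex.exp_nat_mul]; push_cast; ring_nf
    rw [hx, hy]
    have hcc : Complex.cos (((n : ℝ) * φ : ℝ)) = 1 := by
      rw [← Complex.ofReal_cos, hcosn]; norm_num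
    rw [Complex.cos] at hcc
    rw [neg_mul] at hcc
    linear_combination 2 * hcc
  have hint : IsIntegral ℤ (2 * c : ℚ) := by
    obtain ⟨hm, hdeg⟩ := dickson_monic_deg n hn1
    have hmonic : (dickson 1 (1:ℤ) n - C 2).Monic := by
      apply hm.sub_of_left
      refine lt_of_le_of_lt degree_C_le ?_
      rw [degree_eq_natDegree hm.ne_zero, hdeg]
      exact_mod_cast Nat.lt_of_lt_of_le Nat.zero_lt_one hn1
    refine ⟨dickson 1 (1:ℤ) n - C 2, hmonic, ?_⟩
    rw [← aeval_def]
    have key : Polynomial.aeval ((2 * c : ℚ) : ℂ) (dickson 1 (1:ℤ) n - C 2) = 0 := by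
      rw [map_sub, aeval_C]
      have h3 : Polynomial.aeval ((2 * c : ℚ) : ℂ) (dickson 1 (1:ℤ) n)
          = (dickson 1 (1:ℂ) n).eval (2 * (c : ℂ)) := by
        rw [aeval_def, eval₂_eq_eval_map, map_dickson]
        push_cast
        norm_num
      rw [h3, heval]
      simp
    have h2 := Polynomial.aeval_algHom_apply ((algebraMap ℚ ℂ).toIntAlgHom)
      (2 * c : ℚ) (dickson 1 (1:ℤ) n - C 2)
    apply (algebraMap ℚ ℂ).injective
    rw [map_zero]
    have h4 : (algebraMap ℚ ℂ).toIntAlgHom ((aeval (2 * c : ℚ)) (dickson 1 (1:ℤ) n - C 2)) = 0 := by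
      rw [← h2]; simpa using key
    simpa using h4
  obtain ⟨z, hz⟩ := IsIntegrallyClosed.isIntegral_iff.mp hint
  have hzq : (z : ℚ) = 2 * c := by exact_mod_cast hz
  have hzr : (z : ℝ) = 2 * Real.cos φ := by
    rw [← hc]
    exact_mod_cast congrArg (fun q : ℚ => (q : ℝ)) hzq
  have hb1 := Real.neg_one_le_cos φ
  have hb2 := Real.cos_le_one φ
  have hz1 : -2 ≤ z := by exact_mod_cast (show (-2 : ℝ) ≤ (z : ℝ) by rw [hzr]; linarith)
  have hz2 : z ≤ 2 := by exact_mod_cast (show (z : ℝ) ≤ 2 by rw [hzr]; linarith)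
  have hcz : Real.cos φ = (z : ℝ) / 2 := by rw [hzr]; ring
  interval_cases z <;>
    simp only [hcz, Set.mem_insert_iff, Set.mem_singleton_iff] <;> norm_num
end

section
/- (Impossible Triangle Corollary, law-of-cosines form.) Let θ₁, θ₂ ∈ (0, π) with cos θ₁ and cos θ₂ rational, and let φ be a real number with φ/(2π) rational, φ not an integer multiple of π/6 and not an integer multiple of π/4. Then the real number cos θ₁ · cos θ₂ + sin θ₁ · sin θ₂ · cos φ is irrational. -/
/-- Niven-type lemma: if `x` is a rational multiple of `2π` and `cos x` is rational,
then `2 cos x` is an integer. -/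
lemma two_cos_eq_int {x : ℝ} (hx : x / (2 * Real.pi) ∈ Set.range ((↑) : ℚ → ℝ))
    (hc : Real.cos x ∈ Set.range ((↑) : ℚ → ℝ)) :
    ∃ m : ℤ, (m : ℝ) = 2 * Real.cos x := by
  obtain ⟨r, hr⟩ := hx
  obtain ⟨c, hc⟩ := hc
  have hπ : (0:ℝ) < 2 * Real.pi := by positivity
  have hxr : x = (r : ℝ) * (2 * Real.pi) := by
    field_simp at hr; linarith
  set ζ : ℂ := Complex.exp (x * Complex.I) with hζ
  have hn : 0 < r.den := r.pos
  have hnum : ((r.den : ℝ)) * x = (r.num : ℝ) * (2 * Real.pi) := by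
    rw [hxr]
    have : ((r.den : ℚ)) * r = r.num := by
      rw [mul_comm]; exact_mod_cast Rat.mul_den_eq_num r
    have h2 : ((r.den : ℝ)) * (r : ℝ) = (r.num : ℝ) := by exact_mod_cast this
    nlinarith [h2]
  have hζn : ζ ^ r.den = 1 := by
    rw [hζ, ← Complex.exp_nat_mul]
    have key : ((r.den : ℕ) : ℂ) * ((x : ℂ) * Complex.I) = ((r.num : ℤ) : ℂ) * (2 * (Real.pi : ℂ) * Complex.I) := by
      have h0 : ((r.den : ℂ)) * (x : ℂ) = ((r.num : ℂ)) * (2 * (Real.pi : ℂ)) := by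
        exact_mod_cast hnum
      linear_combination Complex.I * h0
    rw [key, Complex.exp_int_mul_two_pi_mul_I]
  have hζinv : ζ⁻¹ ^ r.den = 1 := by rw [inv_pow, hζn, inv_one]
  have hi1 : IsIntegral ℤ ζ := by
    apply IsIntegral.of_pow hn; rw [hζn]; exact isIntegral_one
  have hi2 : IsIntegral ℤ ζ⁻¹ := by
    apply IsIntegral.of_pow hn; rw [hζinv]; exact isIntegral_one
  have hsum : ζ + ζ⁻¹ = ((2 * c : ℚ) : ℂ) := by
    have h1 : ζ⁻¹ = Complex.exp (-(x * Complex.I)) := by rw [hζ, Complex.exp_neg]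
    have h2 : Complex.cos x = (ζ + ζ⁻¹) / 2 := by
      rw [Complex.cos, hζ, h1, neg_mul]
    have h3 : ((Real.cos x : ℝ) : ℂ) = Complex.cos x := Complex.ofReal_cos x
    rw [← hc] at h3
    rw [h2] at h3
    push_cast at h3 ⊢
    linear_combination (-2 : ℂ) * h3
  have hint : IsIntegral ℤ ((2 * c : ℚ) : ℂ) := hsum ▸ hi1.add hi2
  have hint' : IsIntegral ℤ (2 * c : ℚ) := by
    rw [show ((2 * c : ℚ) : ℂ) = algebraMap ℚ ℂ (2 * c) from (eq_ratCast _ _).symm] at hint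
    exact (isIntegral_algebraMap_iff ((algebraMap ℚ ℂ).injective)).mp hint
  obtain ⟨m, hm⟩ := IsIntegrallyClosed.isIntegral_iff.mp hint'
  refine ⟨m, ?_⟩
  have : (m : ℚ) = 2 * c := by rw [← hm]; simp
  rw [← hc]
  exact_mod_cast this



/-- Impossible Triangle Corollary, law-of-cosines form: for `θ₁, θ₂ ∈ (0, π)` with
`cos θ₁`, `cos θ₂` rational, and `φ` a rational multiple of `2π` not an integer
multiple of `π/6` nor of `π/4`, the number
`cos θ₁ · cos θ₂ + sin θ₁ · sin θ₂ · cos φ` is irrational. -/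
theorem impossible_triangle_law_of_cosines (θ₁ θ₂ φ : ℝ)
    (hθ₁ : θ₁ ∈ Set.Ioo 0 Real.pi) (hθ₂ : θ₂ ∈ Set.Ioo 0 Real.pi)
    (hc₁ : Real.cos θ₁ ∈ Set.range ((↑) : ℚ → ℝ))
    (hc₂ : Real.cos θ₂ ∈ Set.range ((↑) : ℚ → ℝ))
    (hφ : φ / (2 * Real.pi) ∈ Set.range ((↑) : ℚ → ℝ))
    (h6 : ¬ ∃ k : ℤ, φ = k * (Real.pi / 6))
    (h4 : ¬ ∃ k : ℤ, φ = k * (Real.pi / 4)) :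
    Irrational (Real.cos θ₁ * Real.cos θ₂ + Real.sin θ₁ * Real.sin θ₂ * Real.cos φ) := by
  rintro ⟨q, hq⟩
  obtain ⟨q₁, hq₁⟩ := hc₁
  obtain ⟨q₂, hq₂⟩ := hc₂
  have hs₁ : 0 < Real.sin θ₁ := Real.sin_pos_of_pos_of_lt_pi hθ₁.1 hθ₁.2
  have hs₂ : 0 < Real.sin θ₂ := Real.sin_pos_of_pos_of_lt_pi hθ₂.1 hθ₂.2
  have h1 : Real.sin θ₁ ^ 2 = ((1 - q₁ ^ 2 : ℚ) : ℝ) := by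
    rw [Real.sin_sq, ← hq₁]; push_cast; ring
  have h2 : Real.sin θ₂ ^ 2 = ((1 - q₂ ^ 2 : ℚ) : ℝ) := by
    rw [Real.sin_sq, ← hq₂]; push_cast; ring
  have ha : (0:ℝ) < ((1 - q₁ ^ 2 : ℚ) : ℝ) := by rw [← h1]; positivity
  have hb : (0:ℝ) < ((1 - q₂ ^ 2 : ℚ) : ℝ) := by rw [← h2]; positivity
  have ha' : (1 - q₁ ^ 2 : ℚ) ≠ 0 := by exact_mod_cast ha.ne'
  have hb' : (1 - q₂ ^ 2 : ℚ) ≠ 0 := by exact_mod_cast hb.ne'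
  have ht : Real.sin θ₁ * Real.sin θ₂ * Real.cos φ = ((q - q₁ * q₂ : ℚ) : ℝ) := by
    push_cast
    rw [← hq₁, ← hq₂] at hq
    linarith
  -- cos (2φ) is rational
  have hsq : Real.cos φ ^ 2 * (((1 - q₁ ^ 2 : ℚ) : ℝ) * ((1 - q₂ ^ 2 : ℚ) : ℝ))
      = ((q - q₁ * q₂ : ℚ) : ℝ) ^ 2 := by
    rw [← h1, ← h2, ← ht]; ring
  have hcos2 : Real.cos (2 * φ)
      = ((2 * (q - q₁ * q₂) ^ 2 / ((1 - q₁ ^ 2) * (1 - q₂ ^ 2)) - 1 : ℚ) : ℝ) := by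
    rw [Real.cos_two_mul]
    have hab : ((1 - q₁ ^ 2 : ℚ) : ℝ) * ((1 - q₂ ^ 2 : ℚ) : ℝ) ≠ 0 :=
      mul_ne_zero ha.ne' hb.ne'
    have e : ((2 * (q - q₁ * q₂) ^ 2 / ((1 - q₁ ^ 2) * (1 - q₂ ^ 2)) - 1 : ℚ) : ℝ)
        = 2 * (((q - q₁ * q₂ : ℚ) : ℝ)) ^ 2
          / (((1 - q₁ ^ 2 : ℚ) : ℝ) * ((1 - q₂ ^ 2 : ℚ) : ℝ)) - 1 := by
      push_cast; ring
    rw [e, ← hsq]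
    have hab' : ((1:ℝ) - (q₁:ℝ) ^ 2) * (1 - (q₂:ℝ) ^ 2) ≠ 0 := by push_cast at hab; exact hab
    field_simp
  have hrat2 : Real.cos (2 * φ) ∈ Set.range ((↑) : ℚ → ℝ) := ⟨_, hcos2.symm⟩
  obtain ⟨r, hr⟩ := hφ
  have hrp : (2 * φ) / (2 * Real.pi) ∈ Set.range ((↑) : ℚ → ℝ) := by
    refine ⟨2 * r, ?_⟩
    push_cast
    rw [hr]
    ring
  obtain ⟨m, hm⟩ := two_cos_eq_int hrp hrat2
  have hc2 : Real.cos (2 * φ) = (m : ℝ) / 2 := by linarith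
  have hbd : Real.cos (2 * φ) ≤ 1 ∧ -1 ≤ Real.cos (2 * φ) :=
    ⟨Real.cos_le_one _, Real.neg_one_le_cos _⟩
  have hml : (-2:ℤ) ≤ m := by
    exact_mod_cast (by linarith [hbd.1, hbd.2] : (-2:ℝ) ≤ (m:ℝ))
  have hmr : m ≤ 2 := by
    exact_mod_cast (by linarith [hbd.1, hbd.2] : ((m:ℝ) ≤ 2))
  interval_cases m
  · -- cos 2φ = -1
    have : Real.cos (2 * φ + Real.pi) = 1 := by
      rw [Real.cos_add_pi, hc2]; norm_num
    obtain ⟨k, hk⟩ := (Real.cos_eq_one_iff _).1 this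
    exact h6 ⟨6 * k - 3, by push_cast; linarith⟩
  · -- cos 2φ = -1/2 ⇒ cos 6φ = 1
    have h6φ : Real.cos (6 * φ) = 1 := by
      have : Real.cos (3 * (2 * φ)) = 4 * Real.cos (2 * φ) ^ 3 - 3 * Real.cos (2 * φ) :=
        Real.cos_three_mul _
      rw [show (3:ℝ) * (2 * φ) = 6 * φ by ring, hc2] at this
      rw [this]; norm_num
    obtain ⟨k, hk⟩ := (Real.cos_eq_one_iff _).1 h6φ
    exact h6 ⟨2 * k, by push_cast; linarith⟩
  · -- cos 2φ = 0 ⇒ cos 4φ = -1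
    have h4φ : Real.cos (4 * φ + Real.pi) = 1 := by
      have : Real.cos (2 * (2 * φ)) = 2 * Real.cos (2 * φ) ^ 2 - 1 := Real.cos_two_mul _
      rw [show (2:ℝ) * (2 * φ) = 4 * φ by ring, hc2] at this
      rw [Real.cos_add_pi, this]; norm_num
    obtain ⟨k, hk⟩ := (Real.cos_eq_one_iff _).1 h4φ
    exact h4 ⟨2 * k - 1, by push_cast; linarith⟩
  · -- cos 2φ = 1/2 ⇒ cos 6φ = -1
    have h6φ : Real.cos (6 * φ + Real.pi) = 1 := by
      have : Real.cos (3 * (2 * φ)) = 4 * Real.cos (2 * φ) ^ 3 - 3 * Real.cos (2 * φ) :=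
        Real.cos_three_mul _
      rw [show (3:ℝ) * (2 * φ) = 6 * φ by ring, hc2] at this
      rw [Real.cos_add_pi, this]; norm_num
    obtain ⟨k, hk⟩ := (Real.cos_eq_one_iff _).1 h6φ
    exact h6 ⟨2 * k - 1, by push_cast; linarith⟩
  · -- cos 2φ = 1
    obtain ⟨k, hk⟩ := (Real.cos_eq_one_iff _).1 (by rw [hc2]; norm_num : Real.cos (2 * φ) = 1)
    exact h6 ⟨6 * k, by push_cast; linarith⟩
end

section
/- (Impossible Triangle Corollary, vector form.) Let X, Y, Z be unit vectors in EuclideanSpace ℝ (Fin 3) with ⟪X,Y⟫ and ⟪Y,Z⟫ rational, |⟪X,Y⟫| ≠ 1 and |⟪Y,Z⟫| ≠ 1. Let φ be the spherical angle at Y between X and Z, and assume φ/(2π) is rational and φ is not an integer multiple of π/6 nor of π/4. Then ⟪X,Z⟫ is irrational. -/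
open scoped InnerProductSpace

/-- The spherical angle at `u` between `v` and `w`: the angle in `[0, π]` between the
tangential projections of `v` and `w` at `u`. -/
noncomputable def sphericalAngle (u v w : EuclideanSpace ℝ (Fin 3)) : ℝ :=
  InnerProductGeometry.angle (v - ⟪v, u⟫_ℝ • u) (w - ⟪w, u⟫_ℝ • u)

open Polynomial

/-- Niven: if `θ` is a rational multiple of `2π` and `cos θ` is rational, then
`cos θ ∈ {-1, -1/2, 0, 1/2, 1}`. -/
lemma niven_cos {θ : ℝ} (h1 : ∃ q : ℚ, θ = q * (2 * Real.pi))
    (h2 : ∃ q : ℚ, (q : ℝ) = Real.cos θ) :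
    Real.cos θ = -1 ∨ Real.cos θ = -1/2 ∨ Real.cos θ = 0 ∨
      Real.cos θ = 1/2 ∨ Real.cos θ = 1 := by
  obtain ⟨r, hr⟩ := h1
  obtain ⟨q, hq⟩ := h2
  set ζ : ℂ := Complex.exp (θ * Complex.I) with hζdef
  have hden : (r.den : ℝ) * θ = (r.num : ℝ) * (2 * Real.pi) := by
    have : ((r.den : ℚ) * r : ℚ) = (r.num : ℚ) := by
      rw [mul_comm]; exact_mod_cast Rat.mul_den_eq_num r
    have := congrArg (fun x : ℚ => (x : ℝ)) this
    push_cast at this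
    rw [hr]; linear_combination (2 * Real.pi) * this
  have hd : ζ ^ r.den = 1 := by
    rw [hζdef, ← Complex.exp_nat_mul]
    have : (r.den : ℂ) * (θ * Complex.I) = (r.num : ℂ) * (2 * Real.pi * Complex.I) := by
      calc (r.den : ℂ) * (θ * Complex.I) = (((r.den : ℝ) * θ : ℝ) : ℂ) * Complex.I := by
            push_cast; ring
        _ = (((r.num : ℝ) * (2 * Real.pi) : ℝ) : ℂ) * Complex.I := by rw [hden]
        _ = (r.num : ℂ) * (2 * Real.pi * Complex.I) := by push_cast; ring
    rw [this]
    exact_mod_cast Complex.exp_int_mul_two_pi_mul_I r.num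
  have hdenpos : (r.den : ℕ) ≠ 0 := r.den_nz
  have hζint : IsIntegral ℤ ζ := by
    refine ⟨X ^ r.den - C 1, monic_X_pow_sub_C 1 hdenpos, ?_⟩
    simp [hd]
  have hζinv : IsIntegral ℤ ζ⁻¹ := by
    have hinv : ζ⁻¹ = ζ ^ (r.den - 1) := by
      have h1' : ζ * ζ ^ (r.den - 1) = 1 := by
        rw [← pow_succ', Nat.sub_add_cancel (Nat.one_le_iff_ne_zero.mpr hdenpos)]
        exact hd
      exact inv_eq_of_mul_eq_one_right h1'
    rw [hinv]; exact hζint.pow _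
  have hsum : IsIntegral ℤ (ζ + ζ⁻¹) := hζint.add hζinv
  have heq : ζ + ζ⁻¹ = ((2 * q : ℚ) : ℂ) := by
    rw [hζdef, ← Complex.exp_neg]
    rw [show -(θ * Complex.I) = -θ * Complex.I by ring]
    rw [← Complex.two_cos]
    rw [← Complex.ofReal_cos, ← hq]
    push_cast; ring
  rw [heq] at hsum
  have hquat : IsIntegral ℤ (2 * q : ℚ) := by
    rw [← isIntegral_algebraMap_iff (algebraMap ℚ ℂ).injective]
    convert hsum using 2
    exact eq_ratCast (algebraMap ℚ ℂ) _
  obtain ⟨n, hn⟩ := IsIntegrallyClosed.isIntegral_iff.mp hquat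
  have hn' : ((n : ℚ) : ℝ) = 2 * Real.cos θ := by
    have : (n : ℚ) = 2 * q := by exact_mod_cast hn
    rw [this]; push_cast; rw [hq]
  have hb : |Real.cos θ| ≤ 1 := Real.abs_cos_le_one θ
  have hn1 : -2 ≤ n := by
    have : (-2 : ℝ) ≤ (n : ℝ) := by push_cast at hn' ⊢; cases abs_le.mp hb; linarith
    exact_mod_cast this
  have hn2 : n ≤ 2 := by
    have : (n : ℝ) ≤ 2 := by push_cast at hn' ⊢; cases abs_le.mp hb; linarith
    exact_mod_cast this
  push_cast at hn'
  interval_cases n <;> push_cast at hn' <;>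
    [exact Or.inl (by linarith);
     exact Or.inr (Or.inl (by linarith));
     exact Or.inr (Or.inr (Or.inl (by linarith)));
     exact Or.inr (Or.inr (Or.inr (Or.inl (by linarith))));
     exact Or.inr (Or.inr (Or.inr (Or.inr (by linarith))))]

/-- Impossible Triangle Corollary, vector form: for unit vectors `X`, `Y`, `Z` with
`⟪X,Y⟫` and `⟪Y,Z⟫` rational, `|⟪X,Y⟫| ≠ 1`, `|⟪Y,Z⟫| ≠ 1`, if the spherical angle
`φ` at `Y` between `X` and `Z` is a rational multiple of `2π` and not an integer
multiple of `π/6` nor of `π/4`, then `⟪X,Z⟫` is irrational. -/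
theorem impossible_triangle_vector (X Y Z : EuclideanSpace ℝ (Fin 3))
    (hX : ‖X‖ = 1) (hY : ‖Y‖ = 1) (hZ : ‖Z‖ = 1)
    (hXYrat : ⟪X, Y⟫_ℝ ∈ Set.range ((↑) : ℚ → ℝ))
    (hYZrat : ⟪Y, Z⟫_ℝ ∈ Set.range ((↑) : ℚ → ℝ))
    (hXY : |⟪X, Y⟫_ℝ| ≠ 1) (hYZ : |⟪Y, Z⟫_ℝ| ≠ 1)
    (hφ : sphericalAngle Y X Z / (2 * Real.pi) ∈ Set.range ((↑) : ℚ → ℝ))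
    (h6 : ¬ ∃ k : ℤ, sphericalAngle Y X Z = k * (Real.pi / 6))
    (h4 : ¬ ∃ k : ℤ, sphericalAngle Y X Z = k * (Real.pi / 4)) :
    Irrational ⟪X, Z⟫_ℝ := by
  by_contra hirr
  rw [Irrational, not_not] at hirr
  obtain ⟨qa, ha⟩ := hXYrat
  obtain ⟨qb, hb⟩ := hYZrat
  obtain ⟨qc, hc⟩ := hirr
  have hYY : ⟪Y, Y⟫_ℝ = 1 := by
    rw [real_inner_self_eq_norm_sq, hY]; norm_num
  have hXX : ⟪X, X⟫_ℝ = 1 := by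
    rw [real_inner_self_eq_norm_sq, hX]; norm_num
  have hZZ : ⟪Z, Z⟫_ℝ = 1 := by
    rw [real_inner_self_eq_norm_sq, hZ]; norm_num
  have hPQ : ⟪X - ⟪X, Y⟫_ℝ • Y, Z - ⟪Z, Y⟫_ℝ • Y⟫_ℝ
      = ⟪X, Z⟫_ℝ - ⟪X, Y⟫_ℝ * ⟪Y, Z⟫_ℝ := by
    simp only [inner_sub_left, inner_sub_right, real_inner_smul_left, real_inner_smul_right,
      hYY, real_inner_comm Z Y, real_inner_comm Y X]
    ring
  have hP2 : ‖X - ⟪X, Y⟫_ℝ • Y‖ ^ 2 = 1 - ⟪X, Y⟫_ℝ ^ 2 := by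
    rw [← real_inner_self_eq_norm_sq]
    simp only [inner_sub_left, inner_sub_right, real_inner_smul_left, real_inner_smul_right,
      hYY, hXX, real_inner_comm Y X]
    ring
  have hQ2 : ‖Z - ⟪Z, Y⟫_ℝ • Y‖ ^ 2 = 1 - ⟪Y, Z⟫_ℝ ^ 2 := by
    rw [← real_inner_self_eq_norm_sq]
    simp only [inner_sub_left, inner_sub_right, real_inner_smul_left, real_inner_smul_right,
      hYY, hZZ, real_inner_comm Z Y]
    ring
  have ha1 : |⟪X, Y⟫_ℝ| < 1 :=
    lt_of_le_of_ne (by simpa [hX, hY] using abs_real_inner_le_norm X Y) hXY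
  have hb1 : |⟪Y, Z⟫_ℝ| < 1 :=
    lt_of_le_of_ne (by simpa [hY, hZ] using abs_real_inner_le_norm Y Z) hYZ
  have hP2pos : (0 : ℝ) < 1 - ⟪X, Y⟫_ℝ ^ 2 := by
    have := (sq_lt_one_iff_abs_lt_one _).mpr ha1; linarith
  have hQ2pos : (0 : ℝ) < 1 - ⟪Y, Z⟫_ℝ ^ 2 := by
    have := (sq_lt_one_iff_abs_lt_one _).mpr hb1; linarith
  have hcos : Real.cos (sphericalAngle Y X Z)
      = (⟪X, Z⟫_ℝ - ⟪X, Y⟫_ℝ * ⟪Y, Z⟫_ℝ)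
        / (‖X - ⟪X, Y⟫_ℝ • Y‖ * ‖Z - ⟪Z, Y⟫_ℝ • Y‖) := by
    rw [sphericalAngle, InnerProductGeometry.cos_angle, hPQ]
  have hcossq : Real.cos (sphericalAngle Y X Z) ^ 2
      = (⟪X, Z⟫_ℝ - ⟪X, Y⟫_ℝ * ⟪Y, Z⟫_ℝ) ^ 2
        / ((1 - ⟪X, Y⟫_ℝ ^ 2) * (1 - ⟪Y, Z⟫_ℝ ^ 2)) := by
    rw [hcos, div_pow, mul_pow, hP2, hQ2]
  have hcos2 : Real.cos (2 * sphericalAngle Y X Z)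
      = 2 * ((⟪X, Z⟫_ℝ - ⟪X, Y⟫_ℝ * ⟪Y, Z⟫_ℝ) ^ 2
        / ((1 - ⟪X, Y⟫_ℝ ^ 2) * (1 - ⟪Y, Z⟫_ℝ ^ 2))) - 1 := by
    rw [Real.cos_two_mul, hcossq]
  have hABrat : ∃ q : ℚ, (q : ℝ) = Real.cos (2 * sphericalAngle Y X Z) := by
    refine ⟨2 * ((qc - qa * qb) ^ 2 / ((1 - qa ^ 2) * (1 - qb ^ 2))) - 1, ?_⟩
    have hden : ((1 - qa ^ 2) * (1 - qb ^ 2) : ℚ) ≠ 0 := by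
      intro h
      have h' : (((1 - qa ^ 2) * (1 - qb ^ 2) : ℚ) : ℝ) = 0 := by exact_mod_cast h
      push_cast at h'
      rw [ha, hb] at h'
      nlinarith [hP2pos, hQ2pos]
    rw [hcos2]
    push_cast
    rw [ha, hb, hc]
  have h2φrat : ∃ q : ℚ, 2 * sphericalAngle Y X Z = q * (2 * Real.pi) := by
    obtain ⟨q, hq⟩ := hφ
    refine ⟨2 * q, ?_⟩
    have hπ : (2 * Real.pi) ≠ 0 := by positivity
    have hφeq : sphericalAngle Y X Z = q * (2 * Real.pi) := (div_eq_iff hπ).mp hq.symm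
    push_cast
    linarith
  have hNiven := niven_cos h2φrat hABrat
  have key : ∀ x : ℝ, Real.cos x = Real.cos (2 * sphericalAngle Y X Z) →
      ∃ k : ℤ, 2 * sphericalAngle Y X Z = 2 * k * Real.pi + x ∨
        2 * sphericalAngle Y X Z = 2 * k * Real.pi - x := fun x hx =>
    Real.cos_eq_cos_iff.mp hx
  rcases hNiven with h | h | h | h | h
  · obtain ⟨k, hk | hk⟩ := key Real.pi (by rw [Real.cos_pi, h])
    · exact h6 ⟨6 * k + 3, by push_cast; linarith⟩
    · exact h6 ⟨6 * k - 3, by push_cast; linarith⟩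
  · obtain ⟨k, hk | hk⟩ := key (2 * Real.pi / 3) (by
      rw [show 2 * Real.pi / 3 = Real.pi - Real.pi / 3 by ring, Real.cos_pi_sub,
        Real.cos_pi_div_three, h]; norm_num)
    · exact h6 ⟨6 * k + 2, by push_cast; linarith⟩
    · exact h6 ⟨6 * k - 2, by push_cast; linarith⟩
  · obtain ⟨k, hk | hk⟩ := key (Real.pi / 2) (by rw [Real.cos_pi_div_two, h])
    · exact h4 ⟨4 * k + 1, by push_cast; linarith⟩
    · exact h4 ⟨4 * k - 1, by push_cast; linarith⟩
  · obtain ⟨k, hk | hk⟩ := key (Real.pi / 3) (by rw [Real.cos_pi_div_three, h])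
    · exact h6 ⟨6 * k + 1, by push_cast; linarith⟩
    · exact h6 ⟨6 * k - 1, by push_cast; linarith⟩
  · obtain ⟨k, hk | hk⟩ := key 0 (by rw [Real.cos_zero, h])
    · exact h6 ⟨6 * k, by push_cast; linarith⟩
    · exact h6 ⟨6 * k, by push_cast; linarith⟩
end

section
/- (Subtraction step (21)–(22) in the paper's CHSH argument.) Let X₀, X₁, Y₀, Y₁ be unit vectors in EuclideanSpace ℝ (Fin 3) such that X₀ and X₁ are each not parallel to Y₀ nor to Y₁. Let γ be the spherical angle at Y₀ between X₀ and X₁, and let δ be the spherical angle at Y₁ between X₀ and X₁. Set a = ⟪X₀,Y₀⟫, b = ⟪X₁,Y₀⟫, c = ⟪X₁,Y₁⟫, d = ⟪X₀,Y₁⟫, and suppose a, b, c, d are all rational. Then the real number √(1−a²)·√(1−b²)·cos γ − √(1−c²)·√(1−d²)·cos δ is rational. -/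
open scoped InnerProductSpace

lemma inner_tang (u v w : EuclideanSpace ℝ (Fin 3)) (hu : ‖u‖ = 1) :
    ⟪v - ⟪v, u⟫_ℝ • u, w - ⟪w, u⟫_ℝ • u⟫_ℝ = ⟪v, w⟫_ℝ - ⟪v, u⟫_ℝ * ⟪w, u⟫_ℝ := by
  rw [inner_sub_left, inner_sub_right, inner_sub_right, real_inner_smul_left,
    real_inner_smul_left, real_inner_smul_right, real_inner_smul_right,
    real_inner_self_eq_norm_sq, hu, real_inner_comm u w]
  ring

lemma norm_tang (u v : EuclideanSpace ℝ (Fin 3)) (hu : ‖u‖ = 1) (hv : ‖v‖ = 1) :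
    ‖v - ⟪v, u⟫_ℝ • u‖ = Real.sqrt (1 - ⟪v, u⟫_ℝ ^ 2) := by
  rw [← Real.sqrt_sq (norm_nonneg _)]
  congr 1
  rw [← real_inner_self_eq_norm_sq, inner_tang u v v hu, real_inner_self_eq_norm_sq, hv]
  ring

lemma key (u v w : EuclideanSpace ℝ (Fin 3)) (hu : ‖u‖ = 1) (hv : ‖v‖ = 1) (hw : ‖w‖ = 1)
    (hvu : |⟪v, u⟫_ℝ| ≠ 1) (hwu : |⟪w, u⟫_ℝ| ≠ 1) :
    Real.sqrt (1 - ⟪v, u⟫_ℝ ^ 2) * Real.sqrt (1 - ⟪w, u⟫_ℝ ^ 2) *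
      Real.cos (sphericalAngle u v w) = ⟪v, w⟫_ℝ - ⟪v, u⟫_ℝ * ⟪w, u⟫_ℝ := by
  have hvb : |⟪v, u⟫_ℝ| < 1 := lt_of_le_of_ne (by
    simpa [hu, hv] using abs_real_inner_le_norm v u) hvu
  have hwb : |⟪w, u⟫_ℝ| < 1 := lt_of_le_of_ne (by
    simpa [hu, hw] using abs_real_inner_le_norm w u) hwu
  have h1 : (0:ℝ) < 1 - ⟪v, u⟫_ℝ ^ 2 := by nlinarith [abs_nonneg (⟪v, u⟫_ℝ), sq_abs (⟪v, u⟫_ℝ)]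
  have h2 : (0:ℝ) < 1 - ⟪w, u⟫_ℝ ^ 2 := by nlinarith [abs_nonneg (⟪w, u⟫_ℝ), sq_abs (⟪w, u⟫_ℝ)]
  have n1 := norm_tang u v hu hv
  have n2 := norm_tang u w hu hw
  have hn1 : ‖v - ⟪v, u⟫_ℝ • u‖ ≠ 0 := by rw [n1]; positivity
  have hn2 : ‖w - ⟪w, u⟫_ℝ • u‖ ≠ 0 := by rw [n2]; positivity
  rw [sphericalAngle, InnerProductGeometry.cos_angle, ← n1, ← n2, inner_tang u v w hu]
  rw [mul_div_cancel₀ _ (mul_ne_zero hn1 hn2)]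

/-- Subtraction step (21)–(22) in the paper's CHSH argument: with all four inner
products `a = ⟪X₀,Y₀⟫`, `b = ⟪X₁,Y₀⟫`, `c = ⟪X₁,Y₁⟫`, `d = ⟪X₀,Y₁⟫` rational, the
difference `√(1-a²)·√(1-b²)·cos γ − √(1-c²)·√(1-d²)·cos δ` is rational, where `γ`
and `δ` are the spherical angles at `Y₀` and `Y₁` between `X₀` and `X₁`. -/
theorem chsh_subtraction_step (X₀ X₁ Y₀ Y₁ : EuclideanSpace ℝ (Fin 3))
    (hX₀ : ‖X₀‖ = 1) (hX₁ : ‖X₁‖ = 1) (hY₀ : ‖Y₀‖ = 1) (hY₁ : ‖Y₁‖ = 1)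
    (h₀₀ : |⟪X₀, Y₀⟫_ℝ| ≠ 1) (h₁₀ : |⟪X₁, Y₀⟫_ℝ| ≠ 1)
    (h₀₁ : |⟪X₀, Y₁⟫_ℝ| ≠ 1) (h₁₁ : |⟪X₁, Y₁⟫_ℝ| ≠ 1)
    (ha : ⟪X₀, Y₀⟫_ℝ ∈ Set.range ((↑) : ℚ → ℝ))
    (hb : ⟪X₁, Y₀⟫_ℝ ∈ Set.range ((↑) : ℚ → ℝ))
    (hc : ⟪X₁, Y₁⟫_ℝ ∈ Set.range ((↑) : ℚ → ℝ))
    (hd : ⟪X₀, Y₁⟫_ℝ ∈ Set.range ((↑) : ℚ → ℝ)) :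
    Real.sqrt (1 - ⟪X₀, Y₀⟫_ℝ ^ 2) * Real.sqrt (1 - ⟪X₁, Y₀⟫_ℝ ^ 2) *
        Real.cos (sphericalAngle Y₀ X₀ X₁) -
      Real.sqrt (1 - ⟪X₁, Y₁⟫_ℝ ^ 2) * Real.sqrt (1 - ⟪X₀, Y₁⟫_ℝ ^ 2) *
        Real.cos (sphericalAngle Y₁ X₀ X₁) ∈ Set.range ((↑) : ℚ → ℝ) := by
  obtain ⟨qa, ha⟩ := ha
  obtain ⟨qb, hb⟩ := hb
  obtain ⟨qc, hc⟩ := hc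
  obtain ⟨qd, hd⟩ := hd
  refine ⟨qc * qd - qa * qb, ?_⟩
  have k1 := key Y₀ X₀ X₁ hY₀ hX₀ hX₁ h₀₀ h₁₀
  have k2 := key Y₁ X₀ X₁ hY₁ hX₀ hX₁ h₀₁ h₁₁
  push_cast
  rw [ha, hb, hc, hd]
  linear_combination k2 - k1
end

section
/- (Rigorous content of the paper's CHSH-configuration analysis, equations (21)–(23).) Let X₀, X₁, Y₀, Y₁ be unit vectors in EuclideanSpace ℝ (Fin 3) such that X₀ and X₁ are each not parallel to Y₀ nor to Y₁. Let γ be the spherical angle at Y₀ between X₀ and X₁, and δ the spherical angle at Y₁ between X₀ and X₁. Set a = ⟪X₀,Y₀⟫, b = ⟪X₁,Y₀⟫, c = ⟪X₁,Y₁⟫, d = ⟪X₀,Y₁⟫. Suppose a, b, c, d are all rational, and that γ/(2π) and δ/(2π) are rational with neither γ nor δ an integer multiple of π/6 or of π/4. Then the real numbers A₁ = √(1−a²)·√(1−b²)·cos γ and A₂ = √(1−c²)·√(1−d²)·cos δ are both irrational, while their difference A₁ − A₂ is rational. -/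
open scoped InnerProductSpace

-- integrality lemma
lemma two_cos_int (θ : ℝ) (q : ℚ) (hθ : θ = q * (2 * Real.pi)) (r : ℚ)
    (hr : (r : ℝ) = Real.cos θ) : ∃ m : ℤ, (m : ℚ) = 2 * r := by
  set n : ℕ := q.den with hn
  have hn1 : 1 ≤ n := q.pos
  set ζ : ℂ := Complex.exp (θ * Complex.I) with hζ
  have hζn : ζ ^ n = 1 := by
    rw [hζ, ← Complex.exp_nat_mul]
    have : (n : ℂ) * (θ * Complex.I) = (q.num : ℂ) * (2 * Real.pi * Complex.I) := by
      have h1 : (n : ℝ) * θ = (q.num : ℝ) * (2 * Real.pi) := by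
        rw [hθ]
        have : ((q.den : ℚ) * q) = (q.num : ℚ) := by
          rw [mul_comm]; exact_mod_cast Rat.mul_den_eq_num q
        have h2 : ((q.den : ℝ) * (q : ℝ)) = (q.num : ℝ) := by exact_mod_cast this
        rw [← mul_assoc, hn, h2]
      calc (n : ℂ) * (θ * Complex.I) = (((n : ℝ) * θ : ℝ) : ℂ) * Complex.I := by push_cast; ring
        _ = (((q.num : ℝ) * (2 * Real.pi) : ℝ) : ℂ) * Complex.I := by rw [h1]
        _ = (q.num : ℂ) * (2 * Real.pi * Complex.I) := by push_cast; ring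
    rw [this, Complex.exp_int_mul_two_pi_mul_I]
  have hint : ∀ z : ℂ, z ^ n = 1 → IsIntegral ℤ z := by
    intro z hz
    refine ⟨Polynomial.X ^ n - Polynomial.C 1, ?_, ?_⟩
    · exact Polynomial.monic_X_pow_sub_C 1 (by omega)
    · simp [Polynomial.eval₂_sub, hz]
  have hζi : IsIntegral ℤ ζ := hint ζ hζn
  have hζinv : IsIntegral ℤ ζ⁻¹ := hint ζ⁻¹ (by rw [inv_pow, hζn, inv_one])
  have hsum : IsIntegral ℤ (ζ + ζ⁻¹) := hζi.add hζinv
  have key : ((2 * r : ℚ) : ℂ) = ζ + ζ⁻¹ := by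
    have h1 : ((2 * r : ℚ) : ℂ) = 2 * Complex.cos (θ : ℂ) := by
      rw [← Complex.ofReal_cos, ← hr]; push_cast; ring
    have hdef : Complex.cos (θ : ℂ) =
        (Complex.exp ((θ:ℂ) * Complex.I) + Complex.exp (-((θ:ℂ) * Complex.I))) / 2 := by
      rw [Complex.cos]; ring_nf
    rw [h1, hdef, Complex.exp_neg, hζ]
    ring
  have h2 : IsIntegral ℤ ((2 * r : ℚ) : ℂ) := key ▸ hsum
  have h3 : IsIntegral ℤ (2 * r : ℚ) := by
    have halg : algebraMap ℚ ℂ (2 * r : ℚ) = ((2 * r : ℚ) : ℂ) := by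
      simp [eq_ratCast]
    exact (isIntegral_algebraMap_iff (algebraMap ℚ ℂ).injective).mp (by rw [halg]; exact h2)
  obtain ⟨m, hm⟩ := IsIntegrallyClosed.isIntegral_iff.mp h3
  exact ⟨m, by exact_mod_cast hm⟩

-- Niven-style lemma: cos² of a rational multiple of 2π is rational only at special angles
lemma niven_sq (γ : ℝ) (q : ℚ) (hq : (q : ℝ) = γ / (2 * Real.pi))
    (h6 : ¬ ∃ k : ℤ, γ = k * (Real.pi / 6)) (h4 : ¬ ∃ k : ℤ, γ = k * (Real.pi / 4))
    (s : ℚ) (hs : (s : ℝ) = Real.cos γ ^ 2) : False := by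
  have hpi := Real.pi_pos
  have hγeq : γ = q * (2 * Real.pi) := by
    field_simp at hq; linarith [hq]
  have h2γ : 2 * γ = (2 * q : ℚ) * (2 * Real.pi) := by push_cast; linarith [hγeq]
  have hcos2 : ((2 * s - 1 : ℚ) : ℝ) = Real.cos (2 * γ) := by
    rw [Real.cos_two_mul, ← hs]; push_cast; ring
  obtain ⟨m, hm⟩ := two_cos_int (2 * γ) (2 * q) h2γ (2 * s - 1) hcos2
  have hmR : (m : ℝ) = 2 * Real.cos (2 * γ) := by
    rw [← hcos2]; exact_mod_cast hm
  have hb1 := Real.neg_one_le_cos (2 * γ)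
  have hb2 := Real.cos_le_one (2 * γ)
  have hml : (-2 : ℤ) ≤ m := by exact_mod_cast show ((-2:ℤ):ℝ) ≤ m by push_cast; linarith
  have hmu : m ≤ 2 := by exact_mod_cast show (m:ℝ) ≤ ((2:ℤ):ℝ) by push_cast; linarith
  -- helper for the π/6 cases
  set c : ℝ := Real.cos (2 * γ) with hcdef
  have six : c ^ 2 = 1 / 4 ∨ c ^ 2 = 1 → False := by
    intro hcase
    have hcos6 : Real.cos (6 * γ) ^ 2 = 1 := by
      have h3 : Real.cos (3 * (2 * γ)) = 4 * c ^ 3 - 3 * c :=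
        Real.cos_three_mul (2 * γ)
      have h63 : (6 : ℝ) * γ = 3 * (2 * γ) := by ring
      rw [h63, h3]
      have hring : (4 * c ^ 3 - 3 * c) ^ 2 = c ^ 2 * (4 * c ^ 2 - 3) ^ 2 := by ring
      rcases hcase with h | h <;> rw [hring, h] <;> norm_num
    have hsin6 : Real.sin (6 * γ) = 0 := by
      have h1 := Real.sin_sq_add_cos_sq (6 * γ)
      have h2 : Real.sin (6 * γ) ^ 2 = 0 := by linarith
      exact pow_eq_zero_iff (two_ne_zero) |>.mp h2
    obtain ⟨k, hk⟩ := Real.sin_eq_zero_iff.mp hsin6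
    exact h6 ⟨k, by linarith⟩
  interval_cases m <;> push_cast at hmR
  · exact six (Or.inr (by nlinarith))
  · exact six (Or.inl (by nlinarith))
  · have h0 : c = 0 := by linarith
    obtain ⟨k, hk⟩ := Real.cos_eq_zero_iff.mp (hcdef ▸ h0)
    exact h4 ⟨2 * k + 1, by push_cast; linarith⟩
  · exact six (Or.inl (by nlinarith))
  · exact six (Or.inr (by nlinarith))


lemma proj_norm (X u : EuclideanSpace ℝ (Fin 3)) (hX : ‖X‖ = 1) (hu : ‖u‖ = 1) :
    ‖X - ⟪X, u⟫_ℝ • u‖ = Real.sqrt (1 - ⟪X, u⟫_ℝ ^ 2) := by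
  have h : ‖X - ⟪X, u⟫_ℝ • u‖ ^ 2 = 1 - ⟪X, u⟫_ℝ ^ 2 := by
    rw [norm_sub_sq_real, real_inner_smul_right, norm_smul, hX, hu]
    simp [Real.norm_eq_abs, mul_pow, sq_abs]
    ring
  rw [← h, Real.sqrt_sq (norm_nonneg _)]

lemma proj_inner (X Y u : EuclideanSpace ℝ (Fin 3)) (hu : ‖u‖ = 1) :
    ⟪X - ⟪X, u⟫_ℝ • u, Y - ⟪Y, u⟫_ℝ • u⟫_ℝ = ⟪X, Y⟫_ℝ - ⟪X, u⟫_ℝ * ⟪Y, u⟫_ℝ := by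
  have huu : ⟪u, u⟫_ℝ = 1 := by
    rw [real_inner_self_eq_norm_sq, hu]; norm_num
  simp only [inner_sub_left, inner_sub_right, real_inner_smul_left, real_inner_smul_right,
    huu, real_inner_comm u Y]
  ring

lemma spherical_identity (X Y u : EuclideanSpace ℝ (Fin 3)) (hX : ‖X‖ = 1) (hY : ‖Y‖ = 1)
    (hu : ‖u‖ = 1) (hXu : |⟪X, u⟫_ℝ| ≠ 1) (hYu : |⟪Y, u⟫_ℝ| ≠ 1) :
    Real.sqrt (1 - ⟪X, u⟫_ℝ ^ 2) * Real.sqrt (1 - ⟪Y, u⟫_ℝ ^ 2) *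
      Real.cos (sphericalAngle u X Y) = ⟪X, Y⟫_ℝ - ⟪X, u⟫_ℝ * ⟪Y, u⟫_ℝ := by
  have hXu2 : ⟪X, u⟫_ℝ ^ 2 < 1 := by
    have h1 : |⟪X, u⟫_ℝ| ≤ 1 := by
      have := abs_real_inner_le_norm X u; rwa [hX, hu, one_mul] at this
    have h2 : |⟪X, u⟫_ℝ| < 1 := lt_of_le_of_ne h1 hXu
    calc ⟪X, u⟫_ℝ ^ 2 = |⟪X, u⟫_ℝ| ^ 2 := (sq_abs _).symm
      _ < 1 := by nlinarith [abs_nonneg ⟪X, u⟫_ℝ]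
  have hYu2 : ⟪Y, u⟫_ℝ ^ 2 < 1 := by
    have h1 : |⟪Y, u⟫_ℝ| ≤ 1 := by
      have := abs_real_inner_le_norm Y u; rwa [hY, hu, one_mul] at this
    have h2 : |⟪Y, u⟫_ℝ| < 1 := lt_of_le_of_ne h1 hYu
    calc ⟪Y, u⟫_ℝ ^ 2 = |⟪Y, u⟫_ℝ| ^ 2 := (sq_abs _).symm
      _ < 1 := by nlinarith [abs_nonneg ⟪Y, u⟫_ℝ]
  have hnX := proj_norm X u hX hu
  have hnY := proj_norm Y u hY hu
  have hsX : (0:ℝ) < Real.sqrt (1 - ⟪X, u⟫_ℝ ^ 2) := Real.sqrt_pos.mpr (by linarith)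
  have hsY : (0:ℝ) < Real.sqrt (1 - ⟪Y, u⟫_ℝ ^ 2) := Real.sqrt_pos.mpr (by linarith)
  have hne : Real.sqrt (1 - ⟪X, u⟫_ℝ ^ 2) * Real.sqrt (1 - ⟪Y, u⟫_ℝ ^ 2) ≠ 0 :=
    ne_of_gt (mul_pos hsX hsY)
  rw [sphericalAngle, InnerProductGeometry.cos_angle, hnX, hnY, proj_inner X Y u hu,
    mul_div_assoc']
  rw [mul_comm]
  exact mul_div_cancel_right₀ _ hne

lemma inner_sq_lt (X u : EuclideanSpace ℝ (Fin 3)) (hX : ‖X‖ = 1) (hu : ‖u‖ = 1)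
    (h : |⟪X, u⟫_ℝ| ≠ 1) : ⟪X, u⟫_ℝ ^ 2 < 1 := by
  have h1 : |⟪X, u⟫_ℝ| ≤ 1 := by
    have := abs_real_inner_le_norm X u; rwa [hX, hu, one_mul] at this
  have h2 : |⟪X, u⟫_ℝ| < 1 := lt_of_le_of_ne h1 h
  calc ⟪X, u⟫_ℝ ^ 2 = |⟪X, u⟫_ℝ| ^ 2 := (sq_abs _).symm
    _ < 1 := by nlinarith [abs_nonneg ⟪X, u⟫_ℝ]

lemma irr_part (X Y u : EuclideanSpace ℝ (Fin 3)) (hX : ‖X‖ = 1) (hY : ‖Y‖ = 1) (hu : ‖u‖ = 1)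
    (hXu : |⟪X, u⟫_ℝ| ≠ 1) (hYu : |⟪Y, u⟫_ℝ| ≠ 1)
    (ha : ⟪X, u⟫_ℝ ∈ Set.range ((↑) : ℚ → ℝ)) (hb : ⟪Y, u⟫_ℝ ∈ Set.range ((↑) : ℚ → ℝ))
    (hq : sphericalAngle u X Y / (2 * Real.pi) ∈ Set.range ((↑) : ℚ → ℝ))
    (h6 : ¬ ∃ k : ℤ, sphericalAngle u X Y = k * (Real.pi / 6))
    (h4 : ¬ ∃ k : ℤ, sphericalAngle u X Y = k * (Real.pi / 4)) :
    Irrational (Real.sqrt (1 - ⟪X, u⟫_ℝ ^ 2) * Real.sqrt (1 - ⟪Y, u⟫_ℝ ^ 2) *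
      Real.cos (sphericalAngle u X Y)) := by
  obtain ⟨qa, hqa⟩ := ha
  obtain ⟨qb, hqb⟩ := hb
  obtain ⟨qγ, hqγ⟩ := hq
  rintro ⟨r, hr⟩
  set γ := sphericalAngle u X Y
  have ha2 : ⟪X, u⟫_ℝ ^ 2 < 1 := inner_sq_lt X u hX hu hXu
  have hb2 : ⟪Y, u⟫_ℝ ^ 2 < 1 := inner_sq_lt Y u hY hu hYu
  have hr2 : (r : ℝ) ^ 2 = (1 - ⟪X, u⟫_ℝ ^ 2) * (1 - ⟪Y, u⟫_ℝ ^ 2) * Real.cos γ ^ 2 := by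
    rw [hr]
    have h1 : Real.sqrt (1 - ⟪X, u⟫_ℝ ^ 2) ^ 2 = 1 - ⟪X, u⟫_ℝ ^ 2 :=
      Real.sq_sqrt (by linarith)
    have h2 : Real.sqrt (1 - ⟪Y, u⟫_ℝ ^ 2) ^ 2 = 1 - ⟪Y, u⟫_ℝ ^ 2 :=
      Real.sq_sqrt (by linarith)
    have h3 : (Real.sqrt (1 - ⟪X, u⟫_ℝ ^ 2) * Real.sqrt (1 - ⟪Y, u⟫_ℝ ^ 2) * Real.cos γ) ^ 2 =
        Real.sqrt (1 - ⟪X, u⟫_ℝ ^ 2) ^ 2 * Real.sqrt (1 - ⟪Y, u⟫_ℝ ^ 2) ^ 2 *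
          Real.cos γ ^ 2 := by ring
    rw [h3, h1, h2]
  set s : ℚ := r ^ 2 / ((1 - qa ^ 2) * (1 - qb ^ 2)) with hs
  have hprod : ((((1 - qa ^ 2) * (1 - qb ^ 2) : ℚ)) : ℝ) =
      (1 - ⟪X, u⟫_ℝ ^ 2) * (1 - ⟪Y, u⟫_ℝ ^ 2) := by
    push_cast; rw [hqa, hqb]
  have hprodpos : (0 : ℝ) < (1 - ⟪X, u⟫_ℝ ^ 2) * (1 - ⟪Y, u⟫_ℝ ^ 2) := by nlinarith
  have hscast : (s : ℝ) = Real.cos γ ^ 2 := by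
    have h1 : (s : ℝ) = (r : ℝ) ^ 2 / (((1 - qa ^ 2) * (1 - qb ^ 2) : ℚ) : ℝ) := by
      rw [hs]; push_cast; ring
    rw [h1, hprod, hr2]
    exact mul_div_cancel_left₀ _ (ne_of_gt hprodpos)

  exact niven_sq γ qγ hqγ h6 h4 s hscast

/-- Rigorous content of the paper's CHSH-configuration analysis (equations
(21)–(23)): with `a = ⟪X₀,Y₀⟫`, `b = ⟪X₁,Y₀⟫`, `c = ⟪X₁,Y₁⟫`, `d = ⟪X₀,Y₁⟫` all
rational, and the spherical angles `γ` (at `Y₀`) and `δ` (at `Y₁`) rational multiples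
of `2π` not integer multiples of `π/6` nor of `π/4`, the quantities
`A₁ = √(1-a²)·√(1-b²)·cos γ` and `A₂ = √(1-c²)·√(1-d²)·cos δ` are both irrational
while `A₁ − A₂` is rational. -/
theorem chsh_configuration_analysis (X₀ X₁ Y₀ Y₁ : EuclideanSpace ℝ (Fin 3))
    (hX₀ : ‖X₀‖ = 1) (hX₁ : ‖X₁‖ = 1) (hY₀ : ‖Y₀‖ = 1) (hY₁ : ‖Y₁‖ = 1)
    (h₀₀ : |⟪X₀, Y₀⟫_ℝ| ≠ 1) (h₁₀ : |⟪X₁, Y₀⟫_ℝ| ≠ 1)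
    (h₀₁ : |⟪X₀, Y₁⟫_ℝ| ≠ 1) (h₁₁ : |⟪X₁, Y₁⟫_ℝ| ≠ 1)
    (ha : ⟪X₀, Y₀⟫_ℝ ∈ Set.range ((↑) : ℚ → ℝ))
    (hb : ⟪X₁, Y₀⟫_ℝ ∈ Set.range ((↑) : ℚ → ℝ))
    (hc : ⟪X₁, Y₁⟫_ℝ ∈ Set.range ((↑) : ℚ → ℝ))
    (hd : ⟪X₀, Y₁⟫_ℝ ∈ Set.range ((↑) : ℚ → ℝ))
    (hγ : sphericalAngle Y₀ X₀ X₁ / (2 * Real.pi) ∈ Set.range ((↑) : ℚ → ℝ))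
    (hδ : sphericalAngle Y₁ X₀ X₁ / (2 * Real.pi) ∈ Set.range ((↑) : ℚ → ℝ))
    (hγ6 : ¬ ∃ k : ℤ, sphericalAngle Y₀ X₀ X₁ = k * (Real.pi / 6))
    (hγ4 : ¬ ∃ k : ℤ, sphericalAngle Y₀ X₀ X₁ = k * (Real.pi / 4))
    (hδ6 : ¬ ∃ k : ℤ, sphericalAngle Y₁ X₀ X₁ = k * (Real.pi / 6))
    (hδ4 : ¬ ∃ k : ℤ, sphericalAngle Y₁ X₀ X₁ = k * (Real.pi / 4)) :
    Irrational (Real.sqrt (1 - ⟪X₀, Y₀⟫_ℝ ^ 2) * Real.sqrt (1 - ⟪X₁, Y₀⟫_ℝ ^ 2) *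
        Real.cos (sphericalAngle Y₀ X₀ X₁)) ∧
      Irrational (Real.sqrt (1 - ⟪X₁, Y₁⟫_ℝ ^ 2) * Real.sqrt (1 - ⟪X₀, Y₁⟫_ℝ ^ 2) *
        Real.cos (sphericalAngle Y₁ X₀ X₁)) ∧
      Real.sqrt (1 - ⟪X₀, Y₀⟫_ℝ ^ 2) * Real.sqrt (1 - ⟪X₁, Y₀⟫_ℝ ^ 2) *
          Real.cos (sphericalAngle Y₀ X₀ X₁) -
        Real.sqrt (1 - ⟪X₁, Y₁⟫_ℝ ^ 2) * Real.sqrt (1 - ⟪X₀, Y₁⟫_ℝ ^ 2) *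
          Real.cos (sphericalAngle Y₁ X₀ X₁) ∈ Set.range ((↑) : ℚ → ℝ) := by
  refine ⟨irr_part X₀ X₁ Y₀ hX₀ hX₁ hY₀ h₀₀ h₁₀ ha hb hγ hγ6 hγ4, ?_, ?_⟩
  · have key := irr_part X₀ X₁ Y₁ hX₀ hX₁ hY₁ h₀₁ h₁₁ hd hc hδ hδ6 hδ4
    rwa [show Real.sqrt (1 - ⟪X₀, Y₁⟫_ℝ ^ 2) * Real.sqrt (1 - ⟪X₁, Y₁⟫_ℝ ^ 2) =
      Real.sqrt (1 - ⟪X₁, Y₁⟫_ℝ ^ 2) * Real.sqrt (1 - ⟪X₀, Y₁⟫_ℝ ^ 2) from mul_comm _ _] at key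
  · obtain ⟨qa, hqa⟩ := ha
    obtain ⟨qb, hqb⟩ := hb
    obtain ⟨qc, hqc⟩ := hc
    obtain ⟨qd, hqd⟩ := hd
    have hA₁ := spherical_identity X₀ X₁ Y₀ hX₀ hX₁ hY₀ h₀₀ h₁₀
    have hA₂ := spherical_identity X₀ X₁ Y₁ hX₀ hX₁ hY₁ h₀₁ h₁₁
    refine ⟨qd * qc - qa * qb, ?_⟩
    rw [hA₁, show Real.sqrt (1 - ⟪X₁, Y₁⟫_ℝ ^ 2) * Real.sqrt (1 - ⟪X₀, Y₁⟫_ℝ ^ 2) =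
      Real.sqrt (1 - ⟪X₀, Y₁⟫_ℝ ^ 2) * Real.sqrt (1 - ⟪X₁, Y₁⟫_ℝ ^ 2) from mul_comm _ _, hA₂]
    push_cast
    rw [hqa, hqb, hqc, hqd]
    ring
end

section
/- (Density of exact settings with rational inner product; the paper's claim that 'there are many points in the two ε-disks which satisfy this constraint'.) For all unit vectors u, v in EuclideanSpace ℝ (Fin 3) and every ε > 0, there exist unit vectors X and Y with ‖X − u‖ < ε, ‖Y − v‖ < ε, and ⟪X,Y⟫ rational. -/
open scoped InnerProductSpace

set_option maxHeartbeats 800000 in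
/-- Density of exact settings with rational inner product: near any pair of unit
vectors `u`, `v` and for any `ε > 0` there are unit vectors `X`, `Y` within `ε` of
`u`, `v` respectively whose inner product `⟪X,Y⟫` is rational. -/
theorem dense_rational_inner_settings (u v : EuclideanSpace ℝ (Fin 3))
    (hu : ‖u‖ = 1) (hv : ‖v‖ = 1) (ε : ℝ) (hε : 0 < ε) :
    ∃ X Y : EuclideanSpace ℝ (Fin 3), ‖X‖ = 1 ∧ ‖Y‖ = 1 ∧
      ‖X - u‖ < ε ∧ ‖Y - v‖ < ε ∧ ⟪X, Y⟫_ℝ ∈ Set.range ((↑) : ℚ → ℝ) := by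
  set c := ⟪u, v⟫_ℝ with hc
  by_cases hrat : c ∈ Set.range ((↑) : ℚ → ℝ)
  · exact ⟨u, v, hu, hv, by simpa using hε, by simpa using hε, hrat⟩
  · have huu : ⟪u, u⟫_ℝ = 1 := by
      rw [real_inner_self_eq_norm_sq, hu]; norm_num
    have hvv : ⟪v, v⟫_ℝ = 1 := by
      rw [real_inner_self_eq_norm_sq, hv]; norm_num
    have hcle : |c| ≤ 1 := by
      have := abs_real_inner_le_norm u v
      rw [hu, hv] at this; simpa using this
    have hclt : |c| < 1 := by
      rcases lt_or_eq_of_le hcle with h | h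
      · exact h
      · exfalso
        rcases abs_eq (by norm_num : (0:ℝ) ≤ 1) |>.mp h with h1 | h1
        · exact hrat ⟨1, by simp [h1]⟩
        · exact hrat ⟨-1, by simp [h1]⟩
    set w : EuclideanSpace ℝ (Fin 3) := v - c • u with hw
    have huw : ⟪u, w⟫_ℝ = 0 := by
      rw [hw, inner_sub_right, real_inner_smul_right, huu, mul_one, ← hc, sub_self]
    have hw2 : ‖w‖ ^ 2 = 1 - c ^ 2 := by
      rw [← real_inner_self_eq_norm_sq, hw, real_inner_sub_sub_self,
        real_inner_smul_right, real_inner_smul_left, real_inner_smul_right,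
        huu, hvv]
      rw [real_inner_comm u v]
      rw [← hc]
      ring
    have hc2 : 0 < 1 - c ^ 2 := by
      have h := abs_lt.mp hclt
      nlinarith [h.1, h.2]
    have hwne : ‖w‖ ≠ 0 := by
      intro h; rw [h] at hw2; norm_num at hw2; nlinarith
    have hwpos : 0 < ‖w‖ := (norm_nonneg w).lt_of_ne (Ne.symm hwne)
    set f : ℝ → EuclideanSpace ℝ (Fin 3) :=
      fun s => s • u + (Real.sqrt (1 - s ^ 2) / ‖w‖) • w with hf
    have hfc : f c = v := by
      have hsw : Real.sqrt (1 - c ^ 2) = ‖w‖ := by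
        rw [← hw2, Real.sqrt_sq (norm_nonneg w)]
      simp only [hf, hsw, div_self hwne, one_smul]
      simp only [hw]
      abel
    have hcont : ContinuousAt f c := by
      apply Continuous.continuousAt
      apply Continuous.add
      · exact continuous_id.smul continuous_const
      · exact ((Real.continuous_sqrt.comp (by continuity)).div_const _).smul continuous_const
    rw [Metric.continuousAt_iff] at hcont
    obtain ⟨δ, hδpos, hδ⟩ := hcont ε hε
    set r := min δ (1 - |c|) with hr
    have hrpos : 0 < r := lt_min hδpos (by linarith)
    obtain ⟨q, hq1, hq2⟩ := exists_rat_btwn (show c - r < c + r by linarith)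
    have hqc : |(q : ℝ) - c| < r := abs_sub_lt_iff.mpr ⟨by linarith, by linarith⟩
    have hq_lt1 : |(q : ℝ)| < 1 := by
      calc |(q : ℝ)| ≤ |(q : ℝ) - c| + |c| := by
            simpa using abs_add_le ((q : ℝ) - c) c
        _ < r + |c| := by linarith
        _ ≤ (1 - |c|) + |c| := by
            have := min_le_right δ (1 - |c|); linarith
        _ = 1 := by ring
    have hq_sq : (0:ℝ) ≤ 1 - (q:ℝ) ^ 2 := by
      have h := abs_le.mp hq_lt1.le
      nlinarith [h.1, h.2]
    have hs : Real.sqrt (1 - (q:ℝ) ^ 2) ^ 2 = 1 - (q:ℝ) ^ 2 := Real.sq_sqrt hq_sq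
    have hinner : ⟪u, f (q:ℝ)⟫_ℝ = (q:ℝ) := by
      simp only [hf]
      rw [inner_add_right, real_inner_smul_right, real_inner_smul_right, huu, huw]
      ring
    have hYnorm : ‖f (q:ℝ)‖ = 1 := by
      have h2 : ‖f (q:ℝ)‖ ^ 2 = 1 := by
        simp only [hf]
        rw [norm_add_sq_real, norm_smul, norm_smul, hu, Real.norm_eq_abs,
          Real.norm_eq_abs,
          abs_of_nonneg (div_nonneg (Real.sqrt_nonneg _) (norm_nonneg w)),
          real_inner_smul_left, real_inner_smul_right, huw,
          div_mul_cancel₀ _ hwne]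
        nlinarith [hs, sq_abs ((q:ℝ))]
      nlinarith [norm_nonneg (f (q:ℝ))]
    have hYclose : ‖f (q:ℝ) - v‖ < ε := by
      have := hδ (show dist (q:ℝ) c < δ by
        rw [Real.dist_eq]; exact lt_of_lt_of_le hqc (min_le_left _ _))
      rwa [hfc, dist_eq_norm] at this
    exact ⟨u, f (q:ℝ), hu, hYnorm, by simpa using hε, hYclose, ⟨q, hinner.symm⟩⟩
end

section
/- (Density of exact settings satisfying both rationality constraints (18) and (19); the paper's claim that 'there are plenty of exact settings X₃ in the ε-neighbourhood for which these rationality constraints are satisfied'.) Let X₁ and X₂ be unit vectors in EuclideanSpace ℝ (Fin 3) with X₂ not parallel to X₁. Then for every unit vector v not parallel to X₁ and every ε > 0, there exists a unit vector X₃ with ‖X₃ − v‖ < ε, with ⟪X₁,X₃⟫ rational and |⟪X₁,X₃⟫| ≠ 1, and such that the spherical angle at X₁ between X₂ and X₃ is a rational multiple of 2π. -/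
open scoped InnerProductSpace
lemma exists_perp (x y : EuclideanSpace ℝ (Fin 3)) :
    ∃ z : EuclideanSpace ℝ (Fin 3), ‖z‖ = 1 ∧ ⟪x, z⟫_ℝ = 0 ∧ ⟪y, z⟫_ℝ = 0 := by
  classical
  set K : Submodule ℝ (EuclideanSpace ℝ (Fin 3)) := Submodule.span ℝ {x, y} with hK
  have hKlt : K < ⊤ := by
    apply span_lt_top_of_card_lt_finrank
    rw [Set.toFinset_insert, Set.toFinset_singleton]
    refine lt_of_le_of_lt (Finset.card_insert_le _ _) ?_
    simp [finrank_euclideanSpace]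
  have horth : Kᗮ ≠ ⊥ := fun h => hKlt.ne ((Submodule.orthogonal_eq_bot_iff).mp h)
  obtain ⟨z', hz'K, hz'⟩ := Submodule.exists_mem_ne_zero_of_ne_bot horth
  refine ⟨‖z'‖⁻¹ • z', ?_, ?_, ?_⟩
  · rw [norm_smul, norm_inv, norm_norm, inv_mul_cancel₀ (norm_ne_zero_iff.mpr hz')]
  · rw [real_inner_smul_right]
    have := (Submodule.mem_orthogonal K z').mp hz'K x (Submodule.subset_span (by simp))
    simp [this]
  · rw [real_inner_smul_right]
    have := (Submodule.mem_orthogonal K z').mp hz'K y (Submodule.subset_span (by simp))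
    simp [this]

lemma norm_eq_one_of_sq {E : Type*} [NormedAddCommGroup E] {x : E} (h : ‖x‖^2 = 1) : ‖x‖ = 1 := by
  nlinarith [norm_nonneg x]

lemma decomp (u x : EuclideanSpace ℝ (Fin 3)) (hu : ‖u‖ = 1) (hx : ‖x‖ = 1)
    (h : |⟪u, x⟫_ℝ| < 1) :
    ∃ w : EuclideanSpace ℝ (Fin 3), ‖w‖ = 1 ∧ ⟪u, w⟫_ℝ = 0 ∧
      x = ⟪u, x⟫_ℝ • u + Real.sqrt (1 - ⟪u, x⟫_ℝ^2) • w := by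
  set c := ⟪u, x⟫_ℝ with hc
  have hc2 : c^2 < 1 := by
    have := abs_lt.mp h
    nlinarith
  set s := Real.sqrt (1 - c^2) with hs
  have hspos : 0 < s := Real.sqrt_pos.mpr (by linarith)
  have hs2 : s^2 = 1 - c^2 := Real.sq_sqrt (by linarith)
  have hnorm : ‖x - c • u‖ = s := by
    have h1 : ‖x - c • u‖^2 = 1 - c^2 := by
      have hxu : ⟪x, u⟫_ℝ = c := real_inner_comm u x
      rw [norm_sub_sq_real, real_inner_smul_right, hxu, norm_smul, hu, hx, Real.norm_eq_abs]
      rw [mul_one, one_pow, sq_abs]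
      ring
    rw [← Real.sqrt_sq (norm_nonneg (x - c • u)), h1]
  refine ⟨s⁻¹ • (x - c • u), ?_, ?_, ?_⟩
  · rw [norm_smul, hnorm, norm_inv, Real.norm_eq_abs, abs_of_pos hspos,
      inv_mul_cancel₀ hspos.ne']
  · rw [real_inner_smul_right, inner_sub_right, real_inner_smul_right,
      real_inner_self_eq_norm_sq, hu, ← hc]
    ring
  · rw [smul_smul, mul_inv_cancel₀ hspos.ne', one_smul]
    abel

set_option maxHeartbeats 1000000 in
/-- Density of exact settings satisfying both rationality constraints (18) and (19):
given unit vectors `X₁`, `X₂` with `X₂` not parallel to `X₁`, for every unit vector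
`v` not parallel to `X₁` and every `ε > 0` there is a unit vector `X₃` within `ε` of
`v` such that `⟪X₁,X₃⟫` is rational with `|⟪X₁,X₃⟫| ≠ 1`, and the spherical angle at
`X₁` between `X₂` and `X₃` is a rational multiple of `2π`. -/
theorem dense_rational_settings_with_angle (X₁ X₂ : EuclideanSpace ℝ (Fin 3))
    (hX₁ : ‖X₁‖ = 1) (hX₂ : ‖X₂‖ = 1) (hX₁₂ : |⟪X₁, X₂⟫_ℝ| ≠ 1)
    (v : EuclideanSpace ℝ (Fin 3)) (hv : ‖v‖ = 1) (hv₁ : |⟪X₁, v⟫_ℝ| ≠ 1)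
    (ε : ℝ) (hε : 0 < ε) :
    ∃ X₃ : EuclideanSpace ℝ (Fin 3), ‖X₃‖ = 1 ∧ ‖X₃ - v‖ < ε ∧
      ⟪X₁, X₃⟫_ℝ ∈ Set.range ((↑) : ℚ → ℝ) ∧ |⟪X₁, X₃⟫_ℝ| ≠ 1 ∧
      sphericalAngle X₁ X₂ X₃ / (2 * Real.pi) ∈ Set.range ((↑) : ℚ → ℝ) := by
  have π_pos := Real.pi_pos
  have h2π : (0:ℝ) < 2 * Real.pi := by linarith
  -- bounds on inner products
  have hcv : |⟪X₁, v⟫_ℝ| < 1 :=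
    lt_of_le_of_ne (by simpa [hX₁, hv] using abs_real_inner_le_norm X₁ v) hv₁
  have hc₂ : |⟪X₁, X₂⟫_ℝ| < 1 :=
    lt_of_le_of_ne (by simpa [hX₁, hX₂] using abs_real_inner_le_norm X₁ X₂) hX₁₂
  set c : ℝ := ⟪X₁, v⟫_ℝ with hcdef
  set c₂ : ℝ := ⟪X₁, X₂⟫_ℝ with hc₂def
  obtain ⟨w, hwn, hwX₁, hvdec⟩ := decomp X₁ v hX₁ hv hcv
  obtain ⟨e₂, he₂n, he₂X₁, hX₂dec⟩ := decomp X₁ X₂ hX₁ hX₂ hc₂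
  set s : ℝ := Real.sqrt (1 - c^2) with hsdef
  set s₂ : ℝ := Real.sqrt (1 - c₂^2) with hs₂def
  have hcv2 : c^2 < 1 := (sq_lt_one_iff_abs_lt_one c).mpr hcv
  have hc₂2 : c₂^2 < 1 := (sq_lt_one_iff_abs_lt_one c₂).mpr hc₂
  have hs₂pos : 0 < s₂ := Real.sqrt_pos.mpr (by linarith)
  -- decompose w in terms of e₂ and a third orthonormal vector e₃
  set a : ℝ := ⟪e₂, w⟫_ℝ with hadef
  have ha1 : |a| ≤ 1 := by simpa [he₂n, hwn] using abs_real_inner_le_norm e₂ w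
  have ha2 : a^2 ≤ 1 := (sq_le_one_iff_abs_le_one a).mpr ha1
  set b : ℝ := Real.sqrt (1 - a^2) with hbdef
  have hb0 : 0 ≤ b := Real.sqrt_nonneg _
  have hbn : ‖w - a • e₂‖ = b := by
    have hwe : ⟪w, e₂⟫_ℝ = a := real_inner_comm e₂ w
    have h1 : ‖w - a • e₂‖^2 = 1 - a^2 := by
      rw [norm_sub_sq_real, real_inner_smul_right, hwe, norm_smul, hwn, he₂n,
        Real.norm_eq_abs, mul_one, one_pow, sq_abs]
      ring
    rw [← Real.sqrt_sq (norm_nonneg (w - a • e₂)), h1]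
  obtain ⟨e₃, he₃n, he₃X₁, he₃e₂, hwdec⟩ :
      ∃ e₃ : EuclideanSpace ℝ (Fin 3), ‖e₃‖ = 1 ∧ ⟪X₁, e₃⟫_ℝ = 0 ∧ ⟪e₂, e₃⟫_ℝ = 0 ∧
        w = a • e₂ + b • e₃ := by
    rcases eq_or_ne (w - a • e₂) 0 with h0 | h0
    · obtain ⟨z, hz, hz1, hz2⟩ := exists_perp X₁ e₂
      have hb : b = 0 := by rw [← hbn, h0, norm_zero]
      exact ⟨z, hz, hz1, hz2, by rw [hb, zero_smul, add_zero, ← sub_eq_zero]; exact h0⟩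
    · have hbpos : 0 < b := hbn ▸ norm_pos_iff.mpr h0
      refine ⟨b⁻¹ • (w - a • e₂), ?_, ?_, ?_, ?_⟩
      · rw [norm_smul, hbn, norm_inv, Real.norm_eq_abs, abs_of_pos hbpos,
          inv_mul_cancel₀ hbpos.ne']
      · rw [real_inner_smul_right, inner_sub_right, real_inner_smul_right, hwX₁, he₂X₁]
        ring
      · rw [real_inner_smul_right, inner_sub_right, real_inner_smul_right, ← hadef,
          real_inner_self_eq_norm_sq, he₂n]
        ring
      · rw [smul_smul, mul_inv_cancel₀ hbpos.ne', one_smul]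
        abel
  -- the angle parameter of w
  set φ₀ : ℝ := Real.arccos a with hφ₀def
  have hφ₀0 : 0 ≤ φ₀ := Real.arccos_nonneg a
  have hφ₀π : φ₀ ≤ Real.pi := Real.arccos_le_pi a
  have hcosφ₀ : Real.cos φ₀ = a := Real.cos_arccos (by linarith [abs_le.mp ha1 |>.1]) (by linarith [abs_le.mp ha1 |>.2])
  have hsinφ₀ : Real.sin φ₀ = b := Real.sin_arccos a
  -- the continuous family
  set G : ℝ × ℝ → EuclideanSpace ℝ (Fin 3) := fun p =>
    p.1 • X₁ + Real.sqrt (1 - p.1^2) • (Real.cos p.2 • e₂ + Real.sin p.2 • e₃) with hGdef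
  have hGc : Continuous G := by fun_prop
  have hGv : G (c, φ₀) = v := by
    simp only [hGdef]
    rw [hcosφ₀, hsinφ₀, ← hwdec, ← hsdef]
    exact hvdec.symm
  obtain ⟨δ, hδpos, hδ⟩ := Metric.continuousAt_iff.mp hGc.continuousAt ε hε
  -- choose a rational q near c
  have hcb := abs_lt.mp hcv
  obtain ⟨q, hq1, hq2⟩ : ∃ q : ℚ, max (-1) (c - δ) < (q:ℝ) ∧ (q:ℝ) < min 1 (c + δ) := by
    refine exists_rat_btwn ?_
    exact lt_of_lt_of_le (max_lt (by linarith) (by linarith))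
      (le_min (by linarith) (by linarith) : c ≤ _)
  have hqlt : |(q:ℝ)| < 1 := abs_lt.mpr ⟨(le_max_left _ _).trans_lt hq1, hq2.trans_le (min_le_left _ _)⟩
  have hqδ : |(q:ℝ) - c| < δ := abs_lt.mpr
    ⟨by linarith [(le_max_right (-1:ℝ) (c - δ)).trans_lt hq1],
     by linarith [hq2.trans_le (min_le_right (1:ℝ) (c + δ))]⟩
  -- choose a rational multiple of 2π near φ₀
  obtain ⟨q', hq'1, hq'2⟩ : ∃ q' : ℚ,
      max 0 (φ₀ - δ) / (2 * Real.pi) < (q':ℝ) ∧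
      (q':ℝ) < min Real.pi (φ₀ + δ) / (2 * Real.pi) := by
    refine exists_rat_btwn (div_lt_div_of_pos_right ?_ h2π)
    exact max_lt (lt_min π_pos (by linarith)) (lt_min (by linarith) (by linarith))
  set φ' : ℝ := (q':ℝ) * (2 * Real.pi) with hφ'def
  have hφ'L : max 0 (φ₀ - δ) < φ' := (div_lt_iff₀ h2π).mp hq'1
  have hφ'U : φ' < min Real.pi (φ₀ + δ) := (lt_div_iff₀ h2π).mp hq'2
  have hφ'0 : 0 ≤ φ' := ((le_max_left 0 _).trans_lt hφ'L).le
  have hφ'π : φ' ≤ Real.pi := (hφ'U.trans_le (min_le_left _ _)).le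
  have hφ'δ : |φ' - φ₀| < δ := abs_lt.mpr
    ⟨by linarith [(le_max_right (0:ℝ) (φ₀ - δ)).trans_lt hφ'L],
     by linarith [hφ'U.trans_le (min_le_right Real.pi (φ₀ + δ))]⟩
  -- the candidate
  set s' : ℝ := Real.sqrt (1 - (q:ℝ)^2) with hs'def
  have hq2lt : (q:ℝ)^2 < 1 := (sq_lt_one_iff_abs_lt_one _).mpr hqlt
  have hs'pos : 0 < s' := Real.sqrt_pos.mpr (by linarith)
  set y : EuclideanSpace ℝ (Fin 3) := Real.cos φ' • e₂ + Real.sin φ' • e₃ with hydef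
  set X₃ : EuclideanSpace ℝ (Fin 3) := (q:ℝ) • X₁ + s' • y with hX₃def
  have hyX₁ : ⟪X₁, y⟫_ℝ = 0 := by
    rw [hydef, inner_add_right, real_inner_smul_right, real_inner_smul_right, he₂X₁, he₃X₁]
    ring
  have hyn : ‖y‖ = 1 := by
    apply norm_eq_one_of_sq
    rw [hydef, norm_add_sq_real, real_inner_smul_left, real_inner_smul_right, he₃e₂,
      norm_smul, norm_smul, he₂n, he₃n, Real.norm_eq_abs, Real.norm_eq_abs,
      mul_one, mul_one, sq_abs, sq_abs]
    linear_combination Real.cos_sq_add_sin_sq φ'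
  have hinner : ⟪X₁, X₃⟫_ℝ = (q:ℝ) := by
    rw [hX₃def, inner_add_right, real_inner_smul_right, real_inner_smul_right,
      real_inner_self_eq_norm_sq, hX₁, hyX₁]
    ring
  have hX₃n : ‖X₃‖ = 1 := by
    apply norm_eq_one_of_sq
    rw [hX₃def, norm_add_sq_real, real_inner_smul_left, real_inner_smul_right, hyX₁,
      norm_smul, norm_smul, hX₁, hyn, Real.norm_eq_abs, Real.norm_eq_abs,
      mul_one, mul_one, sq_abs, sq_abs, hs'def, Real.sq_sqrt (by linarith : (0:ℝ) ≤ 1 - (q:ℝ)^2)]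
    ring
  have hX₃G : X₃ = G ((q:ℝ), φ') := by rw [hGdef, hX₃def, hydef, hs'def]
  have hdist : ‖X₃ - v‖ < ε := by
    rw [← dist_eq_norm, hX₃G, ← hGv]
    apply hδ
    rw [Prod.dist_eq]
    exact max_lt (by rwa [Real.dist_eq]) (by rwa [Real.dist_eq])
  refine ⟨X₃, hX₃n, hdist, ⟨q, hinner.symm⟩, by rw [hinner]; exact hqlt.ne, ?_⟩
  -- the spherical angle is φ'
  have hang : sphericalAngle X₁ X₂ X₃ = φ' := by
    have h1 : ⟪X₂, X₁⟫_ℝ = c₂ := real_inner_comm X₁ X₂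
    have h2 : ⟪X₃, X₁⟫_ℝ = (q:ℝ) := (real_inner_comm X₁ X₃) ▸ hinner
    rw [sphericalAngle, h1, h2]
    have h3 : X₂ - c₂ • X₁ = s₂ • e₂ := by rw [hX₂dec]; abel
    have h4 : X₃ - (q:ℝ) • X₁ = s' • y := by rw [hX₃def]; abel
    rw [h3, h4, InnerProductGeometry.angle_smul_left_of_pos _ _ hs₂pos,
      InnerProductGeometry.angle_smul_right_of_pos _ _ hs'pos,
      InnerProductGeometry.angle, he₂n, hyn]
    have h5 : ⟪e₂, y⟫_ℝ = Real.cos φ' := by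
      rw [hydef, inner_add_right, real_inner_smul_right, real_inner_smul_right, he₃e₂,
        real_inner_self_eq_norm_sq, he₂n]
      ring
    rw [h5]
    simp only [mul_one, div_one]
    exact Real.arccos_cos hφ'0 hφ'π
  rw [hang, hφ'def]
  exact ⟨q', by field_simp⟩
end
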